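/- Every caterpillar is a midpoint unit veto interval (MUVI) graph. -/

import Mathlib

/-!
Send each vertex of the caterpillar into the infinite comb `comb` on `ℕ × Bool`: a spine vertex
goes to its position on the spine, a leaf to the position of its spine neighbour, tagged as a
leaf. Because the graph is a forest, the spine is an induced path, a leaf has a unique spine
neighbour and no two leaves are adjacent, so the caterpillar is the pullback of the comb along this
map. The comb itself is realized by intervals of length 20 around explicit integer midpoints, and a
realization pulls back along any map.
-/

/-- A veto interval: a closed interval `[l, r]` with a veto mark `v`, `l < v < r`. -/
structure VetoInterval where
  l : ℝ
  v : ℝ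
  r : ℝ
  hlv : l < v
  hvr : v < r

/-- Two veto intervals are adjacent iff they intersect and neither contains
the veto mark of the other. -/
def VIAdj (a b : VetoInterval) : Prop :=
  (a.v < b.l ∧ b.l < a.r ∧ a.r < b.v) ∨ (b.v < a.l ∧ a.l < b.r ∧ b.r < a.v)

/-- `G` is a veto interval graph. -/
def IsVIGraph {V : Type*} (G : SimpleGraph V) : Prop :=
  ∃ f : V → VetoInterval, ∀ a b : V, G.Adj a b ↔ VIAdj (f a) (f b)

/-- `G` is a caterpillar: a tree with a path (the spine) such that every
vertex is at distance at most one from the spine. -/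
def IsCaterpillar {V : Type*} (G : SimpleGraph V) : Prop :=
  G.IsTree ∧ ∃ (u w : V) (p : G.Walk u w), p.IsPath ∧
    ∀ v : V, ∃ s ∈ p.support, v = s ∨ G.Adj v s

/-- `G` is a midpoint unit veto interval (MUVI) graph. -/
def IsMUVIGraph {V : Type*} (G : SimpleGraph V) : Prop :=
  ∃ f : V → VetoInterval,
    (∀ a b : V, G.Adj a b ↔ VIAdj (f a) (f b)) ∧
    (∀ a b : V, (f a).r - (f a).l = (f b).r - (f b).l) ∧
    (∀ a : V, (f a).v = ((f a).l + (f a).r) / 2)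

/-- `(i, false)` is the `i`-th spine vertex and `(i, true)` a leaf attached to it. -/
def comb : SimpleGraph (ℕ × Bool) where
  Adj
    | (i, false), (j, false) => j = i + 1 ∨ i = j + 1
    | (i, false), (j, true) | (i, true), (j, false) => i = j
    | (_, true), (_, true) => False
  symm := ⟨by rintro ⟨i, _ | _⟩ ⟨j, _ | _⟩ <;> simp <;> omega⟩
  loopless := ⟨by rintro ⟨i, _ | _⟩ <;> simp⟩

namespace SimpleGraph

variable {V : Type*} {G : SimpleGraph V}

theorem IsAcyclic.eq_of_adj_of_adj_of_isPath (hG : G.IsAcyclic) {x y z : V} {q : G.Walk y z}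
    (hq : q.IsPath) (hx : x ∉ q.support) (hxy : G.Adj x y) (hxz : G.Adj x z) : y = z := by
  simpa using (hG.eq_snd_of_adj_start (p := q.cons hxy) (hq.cons hx) hxz (by simp)).symm

theorem IsAcyclic.adj_getVert_iff (hG : G.IsAcyclic) {u v : V} {p : G.Walk u v} (hp : p.IsPath)
    {i j : ℕ} (hi : i ≤ p.length) (hj : j ≤ p.length) :
    G.Adj (p.getVert i) (p.getVert j) ↔ j = i + 1 ∨ i = j + 1 := by
  refine ⟨fun hadj => ?_, ?_⟩
  · wlog hij : i < j generalizing i j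
    · rcases (not_lt.1 hij).lt_or_eq with hji | rfl
      · exact (this hj hi hadj.symm hji).symm
      · exact absurd rfl hadj.ne
    left
    have hmem : p.getVert j ∈ (p.drop i).support := by
      rw [← Nat.add_sub_cancel' hij.le, ← p.drop_getVert]
      exact Walk.getVert_mem_support _ _
    have hsnd := hG.eq_snd_of_adj_start (hp.drop i) hadj hmem
    rw [Walk.snd, Walk.drop_getVert] at hsnd
    exact hp.getVert_injOn hj (by simp; omega) hsnd
  · rintro (rfl | rfl)
    · exact p.adj_getVert_succ (by omega)
    · exact (p.adj_getVert_succ (by omega)).symm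

theorem Walk.exists_isPath_support_subset {u v : V} (p : G.Walk u v) {s t : V}
    (hs : s ∈ p.support) (ht : t ∈ p.support) :
    ∃ q : G.Walk s t, q.IsPath ∧ q.support ⊆ p.support := by
  classical
  refine ⟨((p.takeUntil s hs).reverse.append (p.takeUntil t ht)).bypass, bypass_isPath _,
    fun z hz => ?_⟩
  rcases List.mem_append.1 (support_append _ _ ▸ support_bypass_subset_support _ hz) with h | h
  · exact p.support_takeUntil_subset_support hs (by simpa using h)
  · exact p.support_takeUntil_subset_support ht (List.mem_of_mem_tail h)

theorem IsAcyclic.eq_of_adj_of_adj_of_notMem_support (hG : G.IsAcyclic) {u v x s t : V}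
    {p : G.Walk u v} (hx : x ∉ p.support) (hs : s ∈ p.support) (ht : t ∈ p.support)
    (hxs : G.Adj x s) (hxt : G.Adj x t) : s = t := by
  obtain ⟨q, hq, hqp⟩ := p.exists_isPath_support_subset hs ht
  exact hG.eq_of_adj_of_adj_of_isPath hq (fun h => hx (hqp h)) hxs hxt

theorem IsAcyclic.not_adj_of_notMem_support (hG : G.IsAcyclic) {u v x y s t : V}
    {p : G.Walk u v} (hx : x ∉ p.support) (hy : y ∉ p.support) (hs : s ∈ p.support)
    (ht : t ∈ p.support) (hxs : G.Adj x s) (hyt : G.Adj y t) : ¬ G.Adj x y := by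
  intro hxy
  obtain ⟨q, hq, hqp⟩ := p.exists_isPath_support_subset hs ht
  have hx' : x ∉ (q.concat hyt.symm).support := by
    rw [Walk.support_concat, List.mem_append, List.mem_singleton]
    exact fun h => h.elim (fun h => hx (hqp h)) hxy.ne
  have hsy := hG.eq_of_adj_of_adj_of_isPath (hq.concat (fun h => hy (hqp h)) hyt.symm) hx' hxs hxy
  exact hy (hsy ▸ hs)

theorem IsAcyclic.eq_comap_comb [DecidableEq V] (hG : G.IsAcyclic)
    {u w : V} {p : G.Walk u w} (hp : p.IsPath) (σ : V → V) (hσ : ∀ v, σ v ∈ p.support)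
    (hσadj : ∀ v ∉ p.support, G.Adj v (σ v)) :
    G = comb.comap fun v =>
      if v ∈ p.support then (p.support.idxOf v, false) else (p.support.idxOf (σ v), true) := by
  have hidx : ∀ s ∈ p.support, p.support.idxOf s ≤ p.length := fun s hs => by
    have := List.idxOf_lt_length_of_mem hs
    rw [Walk.length_support] at this
    omega
  have spine_adj : ∀ s ∈ p.support, ∀ t ∈ p.support, G.Adj s t ↔
      p.support.idxOf t = p.support.idxOf s + 1 ∨ p.support.idxOf s = p.support.idxOf t + 1 :=
    fun s hs t ht => by
      conv_lhs => rw [← p.getVert_support_idxOf hs, ← p.getVert_support_idxOf ht]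
      exact hG.adj_getVert_iff hp (hidx s hs) (hidx t ht)
  have leaf_adj : ∀ s ∈ p.support, ∀ x ∉ p.support,
      G.Adj s x ↔ p.support.idxOf s = p.support.idxOf (σ x) := fun s hs x hx => by
    refine ⟨fun h => congrArg (p.support.idxOf ·) <|
      hG.eq_of_adj_of_adj_of_notMem_support hx hs (hσ x) h.symm (hσadj x hx), fun h => ?_⟩
    rw [← p.getVert_support_idxOf hs, h, p.getVert_support_idxOf (hσ x)]
    exact (hσadj x hx).symm
  ext a b
  by_cases ha : a ∈ p.support <;> by_cases hb : b ∈ p.support <;>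
    simp only [comap_adj, ha, hb, if_true, if_false]
  · exact spine_adj a ha b hb
  · exact leaf_adj a ha b hb
  · exact (G.adj_comm a b).trans ((leaf_adj b hb a ha).trans eq_comm)
  · exact iff_of_false (hG.not_adj_of_notMem_support ha hb (hσ a) (hσ b) (hσadj a ha)
      (hσadj b hb)) id

end SimpleGraph

theorem IsCaterpillar.exists_eq_comap_comb {V : Type*} {G : SimpleGraph V}
    (h : IsCaterpillar G) : ∃ φ : V → ℕ × Bool, G = comb.comap φ := by
  classical
  obtain ⟨htree, u, w, p, hp, hcov⟩ := h
  choose σ hσ hσadj using hcov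
  exact ⟨_, htree.isAcyclic.eq_comap_comb hp σ hσ fun v hv =>
    (hσadj v).resolve_left fun h => hv (h ▸ hσ v)⟩

/-- Veto intervals of length 20 with midpoints `x` and `y` are adjacent iff
`10 < |x - y| < 20`. -/
def unitVetoGraph : SimpleGraph ℤ where
  Adj x y := 10 < |x - y| ∧ |x - y| < 20
  symm := ⟨fun x y h => by rwa [abs_sub_comm]⟩
  loopless := ⟨fun x h => by simp at h⟩

theorem isMUVIGraph_comap_unitVetoGraph {V : Type*} (f : V → ℤ) :
    IsMUVIGraph (unitVetoGraph.comap f) := by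
  refine ⟨fun v => ⟨f v - 10, f v, f v + 10, by linarith, by linarith⟩, fun a b => ?_,
    fun a b => by ring, fun a => by ring⟩
  simp only [SimpleGraph.comap_adj, unitVetoGraph, VIAdj, lt_abs, abs_lt]
  norm_cast
  omega

/-- The spacing `19` makes consecutive spine vertices adjacent and no others. A leaf at distance
`14` from its spine vertex is at distance `5`, `33` or at least `24` from the other spine vertices;
putting the leaves on alternating sides keeps leaves of consecutive spine vertices `9` or `47`
apart. -/
def combPos : ℕ × Bool → ℤ
  | (i, false) => 19 * i
  | (i, true) => 19 * i + if i % 2 = 0 then -14 else 14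

theorem comb_eq_comap_combPos : comb = unitVetoGraph.comap combPos := by
  ext ⟨i, _ | _⟩ ⟨j, _ | _⟩ <;>
    simp only [SimpleGraph.comap_adj, comb, combPos, unitVetoGraph, lt_abs, abs_lt, false_iff] <;>
    (try split_ifs) <;> omega

theorem stmt_7 {V : Type*} (G : SimpleGraph V)
    (h : IsCaterpillar G) : IsMUVIGraph G := by
  obtain ⟨φ, rfl⟩ := h.exists_eq_comap_comb
  rw [comb_eq_comap_combPos, SimpleGraph.comap_comap]
  exact isMUVIGraph_comap_unitVetoGraph _
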